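/- For a Boolean function f : Z_2^n → Z_2, the number imp(f) of implementations of f satisfies the recursion: imp(f) = 1 if ess(f) = 0; imp(f) = 2 if ess(f) = 1; and imp(f) = Σ_{x ∈ Ess(f)} [imp(f(x=0)) + imp(f(x=1))] if ess(f) ≥ 2. -/

import Mathlib

open scoped Classical

namespace Paper

/-- A `k`-valued function of `n` variables. -/
abbrev Fn (k n : ℕ) : Type := (Fin n → ZMod k) → ZMod k

/-- `x i` is an essential variable of `f`. -/
def Essential {k n : ℕ} (f : Fn k n) (i : Fin n) : Prop :=
  ∃ (a : Fin n → ZMod k) (b : ZMod k), f (Function.update a i b) ≠ f a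

/-- The set of essential variables of `f`. -/
def Ess {k n : ℕ} (f : Fn k n) : Set (Fin n) := {i | Essential f i}

/-- The subfunction `f(x i = c)`. -/
def substVar {k n : ℕ} (f : Fn k n) (i : Fin n) (c : ZMod k) : Fn k n :=
  fun a => f (Function.update a i c)

/-- Substitute the constants `c` for all variables in the set `J`. -/
noncomputable def substSet {k n : ℕ} (f : Fn k n) (J : Set (Fin n)) (c : Fin n → ZMod k) : Fn k n :=
  fun a => f (fun i => if i ∈ J then c i else a i)

/-- `g` is a simple subfunction of `f`: obtained by substituting a constant
for an essential variable of `f`. -/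
def SimpleSub {k n : ℕ} (g f : Fn k n) : Prop :=
  ∃ i ∈ Ess f, ∃ c : ZMod k, g = substVar f i c

/-- `Sub f` is the set of all subfunctions of `f` (reflexive-transitive closure of
the simple subfunction relation). -/
def Sub {k n : ℕ} (f : Fn k n) : Set (Fn k n) :=
  {g | Relation.ReflTransGen (fun u v => SimpleSub v u) f g}

/-- `M` is a separable set of variables in `f`: `M = Ess g` for some subfunction `g`. -/
def Separable {k n : ℕ} (f : Fn k n) (M : Set (Fin n)) : Prop :=
  ∃ g ∈ Sub f, Ess g = M

/-- Separability phrased via simultaneous substitution for a set of variables. -/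
def SeparableS {k n : ℕ} (f : Fn k n) (M : Set (Fin n)) : Prop :=
  ∃ (J : Set (Fin n)) (c : Fin n → ZMod k), Ess (substSet f J c) = M

/-- `J` is a set of essential variables disjoint from `M` such that every assignment of
constants to `J` destroys some variable of `M`. -/
def Kills {k n : ℕ} (f : Fn k n) (M J : Set (Fin n)) : Prop :=
  J ⊆ Ess f ∧ J ∩ M = ∅ ∧ ∀ c : Fin n → ZMod k, ¬ M ⊆ Ess (substSet f J c)

/-- `Dis f M` : the family of all distributive sets of `M` in `f`
(inclusion-minimal sets `J` with `Kills f M J`). -/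
def Dis {k n : ℕ} (f : Fn k n) (M : Set (Fin n)) : Set (Set (Fin n)) :=
  {J | Kills f M J ∧ ∀ J' ⊆ J, Kills f M J' → J' = J}

/-- `β` is an s-system of the family `F`. -/
def IsSSystem {n : ℕ} (F : Set (Set (Fin n))) (β : Set (Fin n)) : Prop :=
  (∀ P ∈ F, (β ∩ P).Nonempty) ∧ ∀ x ∈ β, ∃ P ∈ F, P ∩ β = {x}

/-- `x i` is a strongly essential variable of `f`. -/
def StronglyEssential {k n : ℕ} (f : Fn k n) (i : Fin n) : Prop :=
  i ∈ Ess f ∧ ∃ c : ZMod k, Ess (substVar f i c) = Ess f \ {i}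

/-- The number of subfunctions of `f` having exactly `m` essential variables. -/
noncomputable def subCount {k n : ℕ} (f : Fn k n) (m : ℕ) : ℕ :=
  Set.ncard {g ∈ Sub f | (Ess g).ncard = m}

/-- `IsImp f l c` : the list `l` of (variable, constant) substitutions together with the
final value `c` is an implementation of `f`, i.e. a root-to-leaf path in a reduced
ordered decision diagram of `f`: each substituted variable is essential in the current
subfunction, and the final subfunction is the constant `c`. -/
inductive IsImp {k n : ℕ} : Fn k n → List (Fin n × ZMod k) → ZMod k → Prop
  | const (f : Fn k n) (c : ZMod k) : (∀ a, f a = c) → IsImp f [] c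
  | step (f : Fn k n) (i : Fin n) (a : ZMod k) (l : List (Fin n × ZMod k)) (c : ZMod k) :
      i ∈ Ess f → IsImp (substVar f i a) l c → IsImp f ((i, a) :: l) c

/-- The number of implementations of `f`. -/
noncomputable def imp {k n : ℕ} (f : Fn k n) : ℕ :=
  Set.ncard {p : List (Fin n × ZMod k) × ZMod k | IsImp f p.1 p.2}

end Paper

/-!
An implementation of a non-constant `f` is a first step `x_i := c` with `x_i` essential in `f`,
followed by an implementation of `f(x_i = c)`. Distinct first steps give disjoint families, so
`imp f = Σ_{i ∈ Ess f} Σ_c imp f(x_i = c)`; this count needs every `Imp f` to be finite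
(`Set.ncard` of an infinite set is `0`), which follows by induction since `f(x_i = c)` has fewer
essential variables than `f`. A constant function has only the empty implementation, and when
`Ess f = {i}` both `f(x_i = 0)` and `f(x_i = 1)` are constant.
-/

namespace Paper

variable {k n : ℕ}

theorem eq_of_notMem_ess {f : Fn k n} {i : Fin n} (h : i ∉ Ess f) (a : Fin n → ZMod k)
    (b : ZMod k) : f (Function.update a i b) = f a := by
  by_contra hne
  exact h ⟨a, b, hne⟩

theorem ess_substVar_subset (f : Fn k n) (i : Fin n) (c : ZMod k) :
    Ess (substVar f i c) ⊆ Ess f \ {i} := by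
  rintro j ⟨a, b, hab⟩
  have hji : j ≠ i := by
    rintro rfl
    exact hab (by simp [substVar])
  refine ⟨⟨Function.update a i c, b, ?_⟩, hji⟩
  simpa [substVar, Function.update_comm hji] using hab

theorem ncard_ess_substVar_lt {f : Fn k n} {i : Fin n} (hi : i ∈ Ess f) (c : ZMod k) :
    (Ess (substVar f i c)).ncard < (Ess f).ncard :=
  Set.ncard_lt_ncard ((ess_substVar_subset f i c).trans_ssubset (Set.sdiff_singleton_ssubset.2 hi))

theorem apply_eq_of_ess_eq_empty {f : Fn k n} (h : Ess f = ∅) (a b : Fin n → ZMod k) :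
    f b = f a := by
  have piecewise_eq : ∀ s : Finset (Fin n), f (s.piecewise b a) = f a := by
    intro s
    induction s using Finset.induction with
    | empty => simp
    | insert j s _ ih =>
      rw [Finset.piecewise_insert, eq_of_notMem_ess (f := f) (by simp [h]), ih]
  simpa using piecewise_eq Finset.univ

theorem not_forall_eq_of_ess_nonempty {f : Fn k n} (h : (Ess f).Nonempty) (c : ZMod k) :
    ¬ ∀ a, f a = c := by
  obtain ⟨i, a, b, hab⟩ := h
  intro hc
  exact hab (by rw [hc, hc])

def impSet (f : Fn k n) : Set (List (Fin n × ZMod k) × ZMod k) :=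
  {p | IsImp f p.1 p.2}

def consImpSet (f : Fn k n) (q : Fin n × ZMod k) : Set (List (Fin n × ZMod k) × ZMod k) :=
  (fun p => (q :: p.1, p.2)) '' impSet (substVar f q.1 q.2)

theorem impSet_of_ess_eq_empty {f : Fn k n} (h : Ess f = ∅) :
    impSet f = {([], f 0)} := by
  ext ⟨l, c⟩
  constructor
  · rintro (⟨_, _, hc⟩ | ⟨_, i, _, _, _, hi, _⟩)
    · simp [hc 0]
    · simp [h] at hi
  · rintro ⟨rfl, rfl⟩
    exact IsImp.const _ _ fun a => apply_eq_of_ess_eq_empty h 0 a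

theorem impSet_eq_biUnion {f : Fn k n} (h : (Ess f).Nonempty) :
    impSet f = ⋃ q ∈ {q : Fin n × ZMod k | q.1 ∈ Ess f}, consImpSet f q := by
  ext ⟨l, c⟩
  simp only [Set.mem_iUnion, exists_prop]
  constructor
  · rintro (⟨_, _, hc⟩ | ⟨_, i, a, l, _, hi, hl⟩)
    · exact absurd hc (not_forall_eq_of_ess_nonempty h _)
    · exact ⟨(i, a), hi, (l, c), hl, rfl⟩
  · rintro ⟨q, hq, ⟨l', c'⟩, hl', heq⟩
    cases heq
    exact IsImp.step _ _ _ _ _ hq hl'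

theorem pairwiseDisjoint_consImpSet (f : Fn k n) (s : Set (Fin n × ZMod k)) :
    s.PairwiseDisjoint (consImpSet f) := by
  intro q _ q' _ hne
  refine Set.disjoint_left.2 ?_
  rintro _ ⟨p, _, rfl⟩ ⟨p', _, heq⟩
  exact hne (List.cons.inj (congrArg Prod.fst heq)).1.symm

theorem ncard_consImpSet (f : Fn k n) (q : Fin n × ZMod k) :
    (consImpSet f q).ncard = imp (substVar f q.1 q.2) := by
  refine Set.ncard_image_of_injective _ ?_
  rintro ⟨l, c⟩ ⟨l', c'⟩ h
  simp only [Prod.mk.injEq, List.cons.injEq] at h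
  simp [h]

theorem impSet_finite [NeZero k] (f : Fn k n) : (impSet f).Finite := by
  induction h : (Ess f).ncard using Nat.strong_induction_on generalizing f with
  | _ m ih =>
    rcases (Ess f).eq_empty_or_nonempty with he | hne
    · simp [impSet_of_ess_eq_empty he]
    · rw [impSet_eq_biUnion hne]
      exact (Set.toFinite _).biUnion fun q hq =>
        (ih _ (h ▸ ncard_ess_substVar_lt hq q.2) _ rfl).image _

theorem imp_of_ess_eq_empty {f : Fn k n} (h : Ess f = ∅) : imp f = 1 := by
  rw [imp, ← impSet, impSet_of_ess_eq_empty h, Set.ncard_singleton]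

theorem imp_eq_sum_of_ess_nonempty [NeZero k] {f : Fn k n} (h : (Ess f).Nonempty) :
    imp f = ∑ i : Fin n, if i ∈ Ess f then ∑ c : ZMod k, imp (substVar f i c) else 0 := by
  rw [imp, ← impSet, impSet_eq_biUnion h,
    (Set.toFinite _).ncard_biUnion (s := consImpSet f) (fun q _ => (impSet_finite _).image _)
      (pairwiseDisjoint_consImpSet f _), finsum_mem_def, finsum_eq_sum_of_fintype,
    Fintype.sum_prod_type]
  refine Finset.sum_congr rfl fun i _ => ?_
  split_ifs with hi <;> simp [Set.indicator, hi, ncard_consImpSet]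

end Paper

open Paper in
/-- recursion for the number of implementations of a Boolean function:
`imp f = 1` if `ess f = 0`, `imp f = 2` if `ess f = 1`, and
`imp f = Σ_{x ∈ Ess f} (imp f(x=0) + imp f(x=1))` if `ess f ≥ 2`. -/
theorem imp_recursion {n : ℕ} (f : Fn 2 n) :
    ((Ess f).ncard = 0 → imp f = 1) ∧
    ((Ess f).ncard = 1 → imp f = 2) ∧
    (2 ≤ (Ess f).ncard →
      imp f = ∑ i : Fin n,
        if i ∈ Ess f then imp (substVar f i 0) + imp (substVar f i 1) else 0) := by
  -- `ZMod 2` is `Fin 2` by definition.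
  have sum_zmod_two (g : ZMod 2 → ℕ) : ∑ c, g c = g 0 + g 1 := Fin.sum_univ_two g
  refine ⟨fun h0 => imp_of_ess_eq_empty ((Set.ncard_eq_zero).1 h0), fun h1 => ?_, fun h2 => ?_⟩
  · obtain ⟨i, hi⟩ := Set.ncard_eq_one.1 h1
    have imp_substVar (c : ZMod 2) : imp (substVar f i c) = 1 :=
      imp_of_ess_eq_empty (by simpa [hi] using ess_substVar_subset f i c)
    rw [imp_eq_sum_of_ess_nonempty (hi ▸ Set.singleton_nonempty i)]
    simp [hi, imp_substVar]
  · rw [imp_eq_sum_of_ess_nonempty (Set.nonempty_of_ncard_ne_zero (by omega))]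
    simp only [sum_zmod_two]
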